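/- arXiv:2210.06095 — 8 statements merged into one kernel-verified Lean document; each statement's English description precedes it below -/
import Mathlib

section
/- For continuous functions f, g : X → ℝ on a Hausdorff topological vector space X and all x, x' ∈ X: Lf(x,x') + Lg(x,x') ⊑ L(f+g)(x,x'), i.e., the interval L(f+g)(x,x') is contained in the Minkowski sum of the intervals Lf(x,x') and Lg(x,x') (subadditivity of the domain-theoretic directional derivative); equivalently, limsup_{y→x,z→x',r→0⁺} ((f+g)(y+rz)−(f+g)(y))/r ≤ limsup for f plus limsup for g, and dually for liminf. -/
open Filter Topology Classical

variable {X : Type*} [AddCommGroup X] [Module ℝ X] [TopologicalSpace X]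
  [IsTopologicalAddGroup X] [ContinuousSMul ℝ X] [T2Space X]

/-- The filter of difference quotients `(f (y + r • z) - f y) / r` as `y → x`, `z → x'`,
`r → 0⁺`. -/
noncomputable def dqF (f : X → ℝ) (x x' : X) : Filter ℝ :=
  Filter.map (fun p : (X × X) × ℝ => (f (p.1.1 + p.2 • p.1.2) - f p.1.1) / p.2)
    (((𝓝 x) ×ˢ (𝓝 x')) ×ˢ (𝓝[>] (0 : ℝ)))

/-- The domain-theoretic directional derivative `Lf(x,x')` as a subset of `ℝ`:
the compact interval `[liminf, limsup]` of the difference quotients when these are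
bounded, and the whole real line otherwise. -/
noncomputable def LIntv (f : X → ℝ) (x x' : X) : Set ℝ :=
  if (dqF f x x').IsBounded (· ≤ ·) ∧ (dqF f x x').IsBounded (· ≥ ·) then
    Set.Icc (Filter.liminf id (dqF f x x')) (Filter.limsup id (dqF f x x'))
  else Set.univ

/-!
Both sides are determined by the filter of difference quotients, and the difference quotient
of `f + g` is the sum of those of `f` and `g`. So it suffices to show, for real functions `u, v`
along any proper filter, that `[liminf (u + v), limsup (u + v)]` lies in
`[liminf u, limsup u] + [liminf v, limsup v]`; this is `liminf u + liminf v ≤ liminf (u + v)` and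
`limsup (u + v) ≤ limsup u + limsup v`. When `u` or `v` is unbounded, one summand is all of `ℝ`
and the other is nonempty, so the sum is `ℝ`.
-/

open Set
open scoped Pointwise

noncomputable def limIntv (l : Filter ℝ) : Set ℝ :=
  if l.IsBounded (· ≤ ·) ∧ l.IsBounded (· ≥ ·) then Icc (liminf id l) (limsup id l) else univ

lemma limIntv_nonempty (l : Filter ℝ) [l.NeBot] : (limIntv l).Nonempty := by
  unfold limIntv
  split_ifs with h
  · exact nonempty_Icc.2 (liminf_le_limsup h.1 h.2)
  · exact univ_nonempty

lemma limIntv_map_eq_Icc {α : Type*} {l : Filter α} {u : α → ℝ}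
    (hu : IsBoundedUnder (· ≤ ·) l u ∧ IsBoundedUnder (· ≥ ·) l u) :
    limIntv (map u l) = Icc (liminf u l) (limsup u l) :=
  if_pos hu

lemma limIntv_map_add_subset {α : Type*} (l : Filter α) [l.NeBot] (u v : α → ℝ) :
    limIntv (map (u + v) l) ⊆ limIntv (map u l) + limIntv (map v l) := by
  by_cases hu : IsBoundedUnder (· ≤ ·) l u ∧ IsBoundedUnder (· ≥ ·) l u
  swap
  · rw [show limIntv (map u l) = univ from if_neg hu, univ_add (limIntv_nonempty _)]
    exact subset_univ _
  by_cases hv : IsBoundedUnder (· ≤ ·) l v ∧ IsBoundedUnder (· ≥ ·) l v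
  swap
  · rw [show limIntv (map v l) = univ from if_neg hv, add_univ (limIntv_nonempty _)]
    exact subset_univ _
  obtain ⟨hu_le, hu_ge⟩ := hu
  obtain ⟨hv_le, hv_ge⟩ := hv
  rw [limIntv_map_eq_Icc ⟨isBoundedUnder_le_add hu_le hv_le, isBoundedUnder_ge_add hu_ge hv_ge⟩,
    limIntv_map_eq_Icc ⟨hu_le, hu_ge⟩, limIntv_map_eq_Icc ⟨hv_le, hv_ge⟩,
    Icc_add_Icc (liminf_le_limsup hu_le hu_ge) (liminf_le_limsup hv_le hv_ge)]
  exact Icc_subset_Icc (le_liminf_add hu_ge hu_le hv_ge hv_le.isCoboundedUnder_ge)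
    (limsup_add_le hu_ge hu_le hv_ge.isCoboundedUnder_le hv_le)

noncomputable def diffQuot {E : Type*} [Add E] [SMul ℝ E] (f : E → ℝ) (p : (E × E) × ℝ) : ℝ :=
  (f (p.1.1 + p.2 • p.1.2) - f p.1.1) / p.2

lemma diffQuot_add {E : Type*} [Add E] [SMul ℝ E] (f g : E → ℝ) :
    diffQuot (fun y => f y + g y) = diffQuot f + diffQuot g := by
  ext p
  simp only [diffQuot, Pi.add_apply]
  ring

theorem stmt1_general (f g : X → ℝ) (x x' : X) :
    LIntv (fun y => f y + g y) x x' ⊆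
      Set.image2 (· + ·) (LIntv f x x') (LIntv g x x') := by
  have h := limIntv_map_add_subset (((𝓝 x) ×ˢ (𝓝 x')) ×ˢ (𝓝[>] (0 : ℝ)))
    (diffQuot f) (diffQuot g)
  rw [← diffQuot_add] at h
  -- `LIntv f x x'` unfolds to `limIntv (map (diffQuot f) _)`, and `image2 (· + ·)` is `+`.
  exact h

/-- Subadditivity of the domain-theoretic directional derivative:
`Lf(x,x') + Lg(x,x') ⊑ L(f+g)(x,x')`, i.e. the interval `L(f+g)(x,x')` is contained
in the Minkowski sum of the intervals `Lf(x,x')` and `Lg(x,x')`. -/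
theorem stmt1 (f g : X → ℝ) (hf : Continuous f) (hg : Continuous g) (x x' : X) :
    LIntv (fun y => f y + g y) x x' ⊆
      Set.image2 (· + ·) (LIntv f x x') (LIntv g x x') :=
  stmt1_general f g x x'
end

section
/- The domain-theoretic directional derivative Lf : X × X → 𝕀ℝ of a continuous function f : X → ℝ is Scott continuous: if Lf(x,x') is a compact interval, then for every ε > 0 there exist open neighbourhoods O of x and O' of x' and δ > 0 such that for all y ∈ O, z ∈ O', 0 < r < δ, the difference quotient (f(y+rz)−f(y))/r lies in ((Lf(x,x'))⁻ − ε, (Lf(x,x'))⁺ + ε). -/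
open Filter Topology Classical

variable {X : Type*} [AddCommGroup X] [Module ℝ X] [TopologicalSpace X]
  [IsTopologicalAddGroup X] [ContinuousSMul ℝ X] [T2Space X]

theorem Filter.eventually_mem_Ioo_liminf_limsup {l : Filter ℝ} (hub : l.IsBounded (· ≤ ·))
    (hlb : l.IsBounded (· ≥ ·)) {ε : ℝ} (hε : 0 < ε) :
    ∀ᶠ q in l, q ∈ Set.Ioo (liminf id l - ε) (limsup id l + ε) :=
  (eventually_lt_of_lt_liminf (sub_lt_self _ hε) hlb).and
    (eventually_lt_of_limsup_lt (lt_add_of_pos_right _ hε) hub)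

theorem exists_isOpen_isOpen_pos_of_eventually_nhds_prod_nhdsGT {α β : Type*}
    [TopologicalSpace α] [TopologicalSpace β] {a : α} {b : β} {P : α → β → ℝ → Prop}
    (h : ∀ᶠ p in (𝓝 a ×ˢ 𝓝 b) ×ˢ 𝓝[>] (0 : ℝ), P p.1.1 p.1.2 p.2) :
    ∃ O O' : Set _, IsOpen O ∧ IsOpen O' ∧ a ∈ O ∧ b ∈ O' ∧
      ∃ δ > (0 : ℝ), ∀ y ∈ O, ∀ z ∈ O', ∀ r : ℝ, 0 < r → r < δ → P y z r := by
  obtain ⟨pab, hpab, pr, hpr, hP⟩ := eventually_prod_iff.1 h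
  obtain ⟨pa, hpa, pb, hpb, hpab_of⟩ := eventually_prod_iff.1 hpab
  obtain ⟨O, hO, hO_open, haO⟩ := eventually_nhds_iff.1 hpa
  obtain ⟨O', hO', hO'_open, hbO'⟩ := eventually_nhds_iff.1 hpb
  obtain ⟨δ, hδ, hIoo⟩ := mem_nhdsGT_iff_exists_Ioo_subset.1 hpr
  exact ⟨O, O', hO_open, hO'_open, haO, hbO', δ, hδ, fun y hy z hz r hr hrδ =>
    hP (x := (y, z)) (hpab_of (hO y hy) (hO' z hz)) (hIoo ⟨hr, hrδ⟩)⟩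

theorem stmt4_general (f : X → ℝ) (x x' : X)
    (hub : (dqF f x x').IsBounded (· ≤ ·)) (hlb : (dqF f x x').IsBounded (· ≥ ·)) :
    ∀ ε > (0 : ℝ), ∃ O O' : Set X, IsOpen O ∧ IsOpen O' ∧ x ∈ O ∧ x' ∈ O' ∧
      ∃ δ > (0 : ℝ), ∀ y ∈ O, ∀ z ∈ O', ∀ r : ℝ, 0 < r → r < δ →
        (f (y + r • z) - f y) / r ∈
          Set.Ioo (Filter.liminf id (dqF f x x') - ε)
                  (Filter.limsup id (dqF f x x') + ε) := fun _ hε =>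
  exists_isOpen_isOpen_pos_of_eventually_nhds_prod_nhdsGT
    (eventually_map.1 (eventually_mem_Ioo_liminf_limsup hub hlb hε))

/-- Scott continuity of the domain-theoretic directional derivative: if `Lf(x,x')` is a
compact interval, then for every `ε > 0` there are open neighbourhoods `O` of `x`, `O'` of
`x'` and a `δ > 0` such that all difference quotients with `y ∈ O`, `z ∈ O'`, `0 < r < δ`
lie in `(Lf(x,x')⁻ − ε, Lf(x,x')⁺ + ε)`. -/
theorem stmt4 (f : X → ℝ) (hf : Continuous f) (x x' : X)
    (hub : (dqF f x x').IsBounded (· ≤ ·)) (hlb : (dqF f x x').IsBounded (· ≥ ·)) :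
    ∀ ε > (0 : ℝ), ∃ O O' : Set X, IsOpen O ∧ IsOpen O' ∧ x ∈ O ∧ x' ∈ O' ∧
      ∃ δ > (0 : ℝ), ∀ y ∈ O, ∀ z ∈ O', ∀ r : ℝ, 0 < r → r < δ →
        (f (y + r • z) - f y) / r ∈
          Set.Ioo (Filter.liminf id (dqF f x x') - ε)
                  (Filter.limsup id (dqF f x x') + ε) :=
  stmt4_general f x x' hub hlb
end

section
/- If f : ℝ → ℝ is continuous and Lf(x,x') is a bounded (compact) interval at some point (x,x') ∈ ℝ² with x' ≠ 0, then f is locally Lipschitz at x: there exist an open neighbourhood O of x and a constant k > 0 such that |f(x₁) − f(x₂)| ≤ k·|x₁ − x₂| for all x₁, x₂ ∈ O. -/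
open Filter Topology Classical

variable {X : Type*} [AddCommGroup X] [Module ℝ X] [TopologicalSpace X]
  [IsTopologicalAddGroup X] [ContinuousSMul ℝ X] [T2Space X]

/-! Bounded difference quotients in the fixed direction `x'` give `|f (y + r x') - f y| ≤ C r`
for `y` near `x` and small `r > 0`. Since `x' ≠ 0`, two nearby points `a, b` satisfy
`b = a + r x'` with `r = (b - a) / x'`, positive after possibly swapping `a` and `b`; hence
`|f b - f a| ≤ C / |x'| * |b - a|`. -/

open Set Metric

theorem exists_forall_abs_sub_le_of_eventually_abs_dq_le {E : Type*} [TopologicalSpace E]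
    [Add E] [SMul ℝ E] {f : E → ℝ} {x v : E} {C : ℝ}
    (hbound : ∀ᶠ p in (𝓝 x ×ˢ 𝓝 v) ×ˢ 𝓝[>] (0 : ℝ),
      |(f (p.1.1 + p.2 • p.1.2) - f p.1.1) / p.2| ≤ C) :
    ∃ U ∈ 𝓝 x, ∃ ε > 0, ∀ y ∈ U, ∀ r ∈ Ioo 0 ε, |f (y + r • v) - f y| ≤ C * r := by
  have hdir : Tendsto (fun p : E × ℝ => ((p.1, v), p.2)) (𝓝 x ×ˢ 𝓝[>] 0)
      ((𝓝 x ×ˢ 𝓝 v) ×ˢ 𝓝[>] 0) :=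
    (tendsto_fst.prodMk tendsto_const_nhds).prodMk tendsto_snd
  obtain ⟨pU, hU, pr, hpr, hprod⟩ := eventually_prod_iff.1 (hdir.eventually hbound)
  obtain ⟨ε, hε, hIoo⟩ := mem_nhdsGT_iff_exists_Ioo_subset.1 hpr
  refine ⟨{y | pU y}, hU, ε, hε, fun y hy r hr => ?_⟩
  have hq := hprod hy (hIoo hr)
  rwa [abs_div, abs_of_pos hr.1, div_le_iff₀ hr.1] at hq

theorem abs_sub_le_of_forall_abs_sub_le {f : ℝ → ℝ} {s : Set ℝ} {v ε C : ℝ} (hv : v ≠ 0)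
    (h : ∀ y ∈ s, ∀ r ∈ Ioo 0 ε, |f (y + r • v) - f y| ≤ C * r) {a b : ℝ} (ha : a ∈ s)
    (hb : b ∈ s) (hab : |b - a| < ε * |v|) : |f b - f a| ≤ C / |v| * |b - a| := by
  wlog hpos : 0 < (b - a) / v generalizing a b
  · rcases eq_or_ne a b with rfl | hne
    · simp
    have hneg : 0 < (a - b) / v := by
      rw [← neg_sub, neg_div, neg_pos]
      exact (not_lt.1 hpos).lt_of_ne (div_ne_zero (sub_ne_zero.2 hne.symm) hv)
    rw [abs_sub_comm b] at hab ⊢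
    rw [abs_sub_comm (f b)]
    exact this hb ha hab hneg
  set r := (b - a) / v
  have hr : |b - a| / |v| = r := by rw [← abs_div, abs_of_pos hpos]
  have hb_eq : a + r • v = b := by simp [r, div_mul_cancel₀ _ hv]
  have hrε : r < ε := by rwa [← hr, div_lt_iff₀ (abs_pos.2 hv)]
  calc |f b - f a| = |f (a + r • v) - f a| := by rw [hb_eq]
    _ ≤ C * r := h a ha r ⟨hpos, hrε⟩
    _ = C / |v| * |b - a| := by rw [← hr]; ring

theorem stmt5_general (f : ℝ → ℝ) (x x' : ℝ) (hx' : x' ≠ 0)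
    (hub : (dqF f x x').IsBounded (· ≤ ·)) (hlb : (dqF f x x').IsBounded (· ≥ ·)) :
    ∃ O : Set ℝ, IsOpen O ∧ x ∈ O ∧ ∃ k > (0 : ℝ),
      ∀ x₁ ∈ O, ∀ x₂ ∈ O, |f x₁ - f x₂| ≤ k * |x₁ - x₂| := by
  obtain ⟨C, hC⟩ := isBoundedUnder_le_abs.2 ⟨hub, hlb⟩
  obtain ⟨U, hU, ε, hε, hbound⟩ := exists_forall_abs_sub_le_of_eventually_abs_dq_le
    ((eventually_map.1 hC).mono fun _ h => h.trans (le_max_left C 1))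
  obtain ⟨δ, hδ, hball⟩ := Metric.mem_nhds_iff.1 hU
  set ρ := min δ (ε * |x'| / 2)
  have hρ : 0 < ρ := by positivity
  refine ⟨ball x ρ, isOpen_ball, mem_ball_self hρ, max C 1 / |x'|, by positivity,
    fun x₁ h₁ x₂ h₂ => ?_⟩
  have hclose : |x₁ - x₂| < ε * |x'| := by
    have h₁₂ := (dist_triangle_right x₁ x₂ x).trans_lt (add_lt_add h₁ h₂)
    rw [Real.dist_eq] at h₁₂
    linarith [min_le_right δ (ε * |x'| / 2)]
  exact abs_sub_le_of_forall_abs_sub_le hx' hbound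
    (hball (ball_subset_ball (min_le_left _ _) h₂))
    (hball (ball_subset_ball (min_le_left _ _) h₁)) hclose

/-- If `f : ℝ → ℝ` is continuous and `Lf(x,x')` is a bounded (compact) interval at some
`(x,x')` with `x' ≠ 0`, then `f` is locally Lipschitz at `x`. -/
theorem stmt5 (f : ℝ → ℝ) (hf : Continuous f) (x x' : ℝ) (hx' : x' ≠ 0)
    (hub : (dqF f x x').IsBounded (· ≤ ·)) (hlb : (dqF f x x').IsBounded (· ≥ ·)) :
    ∃ O : Set ℝ, IsOpen O ∧ x ∈ O ∧ ∃ k > (0 : ℝ),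
      ∀ x₁ ∈ O, ∀ x₂ ∈ O, |f x₁ - f x₂| ≤ k * |x₁ - x₂| :=
  stmt5_general f x x' hx' hub hlb
end

section
/- If g : [a,b] → ℝ is non-decreasing and right-continuous with c = g(a), d = g(b), then there exists a non-decreasing right-continuous map g† : [c,d] → [a,b] such that for every continuous f : [a,b] → ℝ, the Riemann–Stieltjes integral ∫ₐᵇ f dg equals the Riemann integral ∫_c^d f(g†(x)) dx. -/
/-!
The map `g†` is the right-continuous generalized inverse `g† x = inf {t ∈ [a,b] | x < g t}`
(`b` if that set is empty). It satisfies the Galois-type sandwich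
`(g a, g t) ⊆ {x ∈ (g a, g b] | g† x ≤ t} ⊆ (g a, g t]` for `t ∈ [a,b]`, so the pushforward of
Lebesgue measure on `(g a, g b]` under `g†` has the same distribution function as the
Lebesgue–Stieltjes measure of `g` on `(a,b]`. The integral identity is then the change of
variables formula for a pushforward measure.
-/

open MeasureTheory Set

namespace StieltjesFunction

variable (g : StieltjesFunction ℝ) (a b : ℝ)

noncomputable def genInv (x : ℝ) : ℝ := sInf (insert b {t ∈ Icc a b | x < g t})

variable {g a b}

lemma bddBelow_genInv_set (hab : a ≤ b) (x : ℝ) :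
    BddBelow (insert b {t ∈ Icc a b | x < g t}) :=
  ⟨a, forall_mem_insert.2 ⟨hab, fun _ ht => ht.1.1⟩⟩

lemma genInv_mem_Icc (hab : a ≤ b) (x : ℝ) : g.genInv a b x ∈ Icc a b :=
  ⟨le_csInf (insert_nonempty _ _) (forall_mem_insert.2 ⟨hab, fun _ ht => ht.1.1⟩),
    csInf_le (bddBelow_genInv_set hab x) (mem_insert _ _)⟩

lemma genInv_le_of_mem (hab : a ≤ b) {x s : ℝ} (hs : s ∈ insert b {t ∈ Icc a b | x < g t}) :
    g.genInv a b x ≤ s :=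
  csInf_le (bddBelow_genInv_set hab x) hs

lemma genInv_le {x t : ℝ} (ht : t ∈ Icc a b) (hx : x < g t) : g.genInv a b x ≤ t :=
  genInv_le_of_mem (ht.1.trans ht.2) (mem_insert_of_mem _ ⟨ht, hx⟩)

lemma genInv_mono (hab : a ≤ b) : Monotone (g.genInv a b) := fun _ _ hxy =>
  csInf_le_csInf (bddBelow_genInv_set hab _) (insert_nonempty _ _)
    (insert_subset_insert fun _ ⟨ht, hxt⟩ => ⟨ht, hxy.trans_lt hxt⟩)

lemma le_apply_genInv (hab : a ≤ b) {x : ℝ} (hx : x ≤ g b) : x ≤ g (g.genInv a b x) := by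
  rw [← g.iInf_Ioi_eq]
  refine le_ciInf fun ⟨u, hu⟩ => ?_
  obtain ⟨s, hs, hsu⟩ := exists_lt_of_csInf_lt (insert_nonempty _ _) (show sInf _ < u from hu)
  rcases hs with rfl | ⟨-, hxs⟩
  · exact hx.trans (g.mono hsu.le)
  · exact hxs.le.trans (g.mono hsu.le)

lemma continuousWithinAt_genInv (hab : a ≤ b) (x : ℝ) :
    ContinuousWithinAt (g.genInv a b) (Ici x) x := by
  refine tendsto_order.2 ⟨fun l hl => ?_, fun u hu => ?_⟩
  · filter_upwards [self_mem_nhdsWithin] with y hy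
    exact hl.trans_le (genInv_mono hab hy)
  · obtain ⟨s, hs, hsu⟩ := exists_lt_of_csInf_lt (insert_nonempty _ _) hu
    have hs_eventually : ∀ᶠ y in nhdsWithin x (Ici x), s ∈ insert b {t ∈ Icc a b | y < g t} := by
      rcases hs with rfl | ⟨hs, hxs⟩
      · exact Filter.Eventually.of_forall fun _ => mem_insert _ _
      · filter_upwards [Ico_mem_nhdsGE hxs] with y hy
        exact mem_insert_of_mem _ ⟨hs, hy.2⟩
    filter_upwards [hs_eventually] with y hy
    exact (genInv_le_of_mem hab hy).trans_lt hsu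

lemma volume_genInv_preimage_Iic (hab : a ≤ b) (t : ℝ) :
    volume (g.genInv a b ⁻¹' Iic t ∩ Ioc (g a) (g b)) = ENNReal.ofReal (g (min b t) - g a) := by
  have hlower : Ioo (g a) (g (min b t)) ⊆ g.genInv a b ⁻¹' Iic t ∩ Ioc (g a) (g b) := by
    rintro x ⟨hax, hxt⟩
    have ha : a ≤ min b t := not_lt.1 fun h => (hax.trans hxt).not_ge (g.mono h.le)
    exact ⟨(genInv_le ⟨ha, min_le_left _ _⟩ hxt).trans (min_le_right _ _),
      hax, hxt.le.trans (g.mono (min_le_left _ _))⟩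
  have hupper : g.genInv a b ⁻¹' Iic t ∩ Ioc (g a) (g b) ⊆ Ioc (g a) (g (min b t)) := by
    rintro x ⟨hxt, hax, hxb⟩
    exact ⟨hax, (le_apply_genInv hab hxb).trans
      (g.mono (le_min (genInv_mem_Icc hab x).2 hxt))⟩
  refine le_antisymm ((measure_mono hupper).trans_eq Real.volume_Ioc) ?_
  exact Real.volume_Ioo ▸ measure_mono hlower

lemma map_genInv_volume (hab : a ≤ b) :
    (volume.restrict (Ioc (g a) (g b))).map (g.genInv a b) = g.measure.restrict (Ioc a b) := by
  have hmeas : Measurable (g.genInv a b) := (genInv_mono hab).measurable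
  refine Measure.ext_of_Iic _ _ fun t => ?_
  rw [Measure.map_apply hmeas measurableSet_Iic, Measure.restrict_apply (hmeas measurableSet_Iic),
    Measure.restrict_apply measurableSet_Iic, inter_comm (Iic t), Ioc_inter_Iic, g.measure_Ioc,
    volume_genInv_preimage_Iic hab]

end StieltjesFunction

open StieltjesFunction in
/-- Change of variables for the Riemann–Stieltjes integral: if `g` is non-decreasing and
right-continuous (a Stieltjes function) with `c = g a`, `d = g b`, then there is a
non-decreasing right-continuous map `g† : [c,d] → [a,b]` such that for every continuous
`f : [a,b] → ℝ`, the Riemann–Stieltjes integral `∫ₐᵇ f dg` (realized as the integral of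
`f` over `(a,b]` against the Lebesgue–Stieltjes measure of `g`) equals the Riemann
integral `∫_c^d f (g† x) dx`. -/
theorem stmt9 (a b : ℝ) (hab : a ≤ b) (g : StieltjesFunction ℝ) :
    ∃ gd : ℝ → ℝ,
      MonotoneOn gd (Set.Icc (g a) (g b)) ∧
      (∀ x ∈ Set.Ico (g a) (g b), ContinuousWithinAt gd (Set.Ici x) x) ∧
      (∀ x ∈ Set.Icc (g a) (g b), gd x ∈ Set.Icc a b) ∧
      ∀ f : ℝ → ℝ, ContinuousOn f (Set.Icc a b) →
        ∫ x in Set.Ioc a b, f x ∂g.measure = ∫ x in (g a)..(g b), f (gd x) := by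
  refine ⟨g.genInv a b, (genInv_mono hab).monotoneOn _,
    fun x _ => continuousWithinAt_genInv hab x, fun x _ => genInv_mem_Icc hab x, fun f hf => ?_⟩
  have hf_meas : AEStronglyMeasurable f (g.measure.restrict (Ioc a b)) :=
    (hf.mono Ioc_subset_Icc_self).aestronglyMeasurable measurableSet_Ioc
  rw [intervalIntegral.integral_of_le (g.mono hab), ← map_genInv_volume hab,
    integral_map (genInv_mono hab).measurable.aemeasurable (map_genInv_volume hab ▸ hf_meas)]
end

section
/- Let F : C([0,1], ℝ) → ℝ be a continuous linear functional (with respect to the sup norm). Then there exist compact intervals [c₁,d₁], [c₂,d₂] and right-continuous non-decreasing maps g₁† : [c₁,d₁] → [0,1] and g₂† : [c₂,d₂] → [0,1] such that for every continuous f : [0,1] → ℝ, F(f) = ∫_{c₁}^{d₁} f(g₁†(x)) dx − ∫_{c₂}^{d₂} f(g₂†(x)) dx. -/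
/-!
Extend `F` by Hahn–Banach to a functional `G` on the bounded functions on `[0,1]` and put
`β t = G 𝟙_{s ≤ t}`. Testing `G` against signed sums of such indicators bounds the variation of
`β` by `‖G‖`, so `β = P - N` with `P`, `N` non-decreasing and vanishing on `(-∞, 0)`. A
continuous `f` is uniformly close to the step function `∑ f (tᵢ₊₁) 𝟙_{(tᵢ, tᵢ₊₁]}`, so `F f` is
the limit of the Riemann–Stieltjes sums `∑ f (tᵢ₊₁) (β tᵢ₊₁ - β tᵢ)`. For non-decreasing `h`, the
right-continuous generalized inverse `h†` maps `(h tᵢ, h tᵢ₊₁)` into `[tᵢ, tᵢ₊₁]`, so the same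
sums for `h` approximate `∫₀^{h 1} f (h† x) dx`. Take `g₁ = P†` and `g₂ = N†`.
-/

open Set MeasureTheory
open scoped ENNReal

noncomputable section

lemma UniformContinuous.exists_forall_abs_sub_le {φ : ℝ → ℝ} (hφ : UniformContinuous φ)
    {ε : ℝ} (hε : 0 < ε) : ∃ δ > 0, ∀ s t, |s - t| ≤ δ → |φ s - φ t| ≤ ε := by
  obtain ⟨δ, hδ, hφδ⟩ := Metric.uniformContinuous_iff.1 hφ ε hε
  refine ⟨δ / 2, half_pos hδ, fun s t hst => ?_⟩
  simpa only [Real.dist_eq] using (hφδ (by rw [Real.dist_eq]; linarith)).le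

lemma eq_of_forall_abs_sub_le_mul {a b C : ℝ} (h : ∀ ε > 0, |a - b| ≤ ε * C) : a = b := by
  refine eq_of_forall_dist_le fun ε hε => ?_
  have hC : 0 < |C| + 1 := by positivity
  calc dist a b ≤ ε / (|C| + 1) * C := h _ (div_pos hε hC)
    _ ≤ ε / (|C| + 1) * (|C| + 1) := by gcongr; linarith [le_abs_self C]
    _ = ε := div_mul_cancel₀ ε hC.ne'

lemma abs_sum_mul_sub_le_of_monotone {a c : ℕ → ℝ} (ha : Monotone a) (hc : ∀ k, |c k| ≤ 1)
    (n : ℕ) : |∑ k ∈ Finset.range n, c k * (a (k + 1) - a k)| ≤ a n - a 0 := by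
  calc |∑ k ∈ Finset.range n, c k * (a (k + 1) - a k)|
      ≤ ∑ k ∈ Finset.range n, |c k * (a (k + 1) - a k)| := Finset.abs_sum_le_sum_abs _ _
    _ ≤ ∑ k ∈ Finset.range n, (a (k + 1) - a k) := by
        refine Finset.sum_le_sum fun k _ => ?_
        rw [abs_mul, abs_of_nonneg (sub_nonneg.2 (ha k.le_succ))]
        exact mul_le_of_le_one_left (sub_nonneg.2 (ha k.le_succ)) (hc k)
    _ = a n - a 0 := Finset.sum_range_sub a n

lemma exists_sum_mul_indicator_steps_eq {u : ℕ → ℝ} (hu : Monotone u) (c : ℕ → ℝ) {s : ℝ}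
    (hs0 : u 0 < s) : ∀ n, s ≤ u n → ∃ i < n, u i < s ∧ s ≤ u (i + 1) ∧
      ∑ k ∈ Finset.range n,
        c k * ((if s ≤ u (k + 1) then 1 else 0) - (if s ≤ u k then 1 else 0)) = c i
  | 0, hsn => absurd hsn hs0.not_ge
  | n + 1, hsn => by
    rw [Finset.sum_range_succ]
    by_cases hs : s ≤ u n
    · obtain ⟨i, hi, hsi, his, hsum⟩ := exists_sum_mul_indicator_steps_eq hu c hs0 n hs
      exact ⟨i, hi.trans n.lt_succ_self, hsi, his, by simp [hsum, hs, hsn]⟩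
    · refine ⟨n, n.lt_succ_self, not_le.1 hs, hsn, ?_⟩
      rw [Finset.sum_eq_zero fun k hk => ?_]
      · simp [hs, hsn]
      · have hk : k + 1 ≤ n := Finset.mem_range.1 hk
        have h1 : ¬ s ≤ u (k + 1) := fun h => hs (h.trans (hu hk))
        have h2 : ¬ s ≤ u k := fun h => hs (h.trans (hu (k.le_succ.trans hk)))
        simp [h1, h2]

lemma exists_monotone_sub_of_locallyBoundedVariationOn {β : ℝ → ℝ}
    (hβ : LocallyBoundedVariationOn β univ) (hβ0 : ∀ t < 0, β t = 0) :
    ∃ P N : ℝ → ℝ, Monotone P ∧ Monotone N ∧ (∀ t < 0, P t = 0) ∧ (∀ t < 0, N t = 0) ∧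
      β = P - N := by
  set P := variationOnFromTo β univ (-1)
  have hP0 : ∀ t < 0, P t = 0 := fun t ht => by
    have hvanish : ∀ x ∈ univ ∩ uIcc (-1) t, β x = 0 := fun x hx =>
      hβ0 x (hx.2.2.trans_lt (max_lt (by norm_num) ht))
    exact (variationOnFromTo.eq_zero_iff hβ (mem_univ _) (mem_univ _)).2
      fun x hx y hy => by simp [hvanish x hx, hvanish y hy]
  refine ⟨P, P - β, monotoneOn_univ.1 (variationOnFromTo.monotoneOn hβ (mem_univ _)),
    monotoneOn_univ.1 (variationOnFromTo.sub_self_monotoneOn hβ (mem_univ _)), hP0,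
    fun t ht => by simp [hP0 t ht, hβ0 t ht], by simp⟩

def stieltjesSum (φ β : ℝ → ℝ) (u : ℕ → ℝ) (n : ℕ) : ℝ :=
  ∑ i ∈ Finset.range n, φ (u (i + 1)) * (β (u (i + 1)) - β (u i))

lemma stieltjesSum_sub (φ β₁ β₂ : ℝ → ℝ) (u : ℕ → ℝ) (n : ℕ) :
    stieltjesSum φ (β₁ - β₂) u n = stieltjesSum φ β₁ u n - stieltjesSum φ β₂ u n := by
  simp only [stieltjesSum, ← Finset.sum_sub_distrib, Pi.sub_apply]
  exact Finset.sum_congr rfl fun _ _ => by ring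

-- Starting below `0` lets the first step `(u 0, u 1]` catch a point mass at `0`.
lemma exists_partition {δ : ℝ} (hδ : 0 < δ) :
    ∃ (n : ℕ) (u : ℕ → ℝ), Monotone u ∧ u 0 < 0 ∧ u n = 1 ∧ ∀ i, u (i + 1) - u i ≤ δ := by
  obtain ⟨n, hn⟩ := exists_nat_gt (2 / δ)
  have hn0 : (0 : ℝ) < n := (div_pos two_pos hδ).trans hn
  refine ⟨n, fun i => 2 * i / n - 1, fun i j hij => ?_, by simp, by field_simp; ring,
    fun i => ?_⟩
  · have : (i : ℝ) ≤ j := Nat.cast_le.2 hij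
    dsimp only
    gcongr
  · have : 2 / (n : ℝ) ≤ δ := by rw [div_le_iff₀ hn0]; rw [div_lt_iff₀ hδ] at hn; linarith
    calc 2 * ((i + 1 : ℕ) : ℝ) / n - 1 - (2 * i / n - 1) = 2 / n := by push_cast; ring
      _ ≤ δ := this

/-- The right-continuous generalized inverse `x ↦ inf {t ≥ 0 | x < h t}` of a non-decreasing `h`,
as a map `[0, h 1) → [0, 1]`; it is set to `1` from `h 1` on. -/
def quantile (h : ℝ → ℝ) (x : ℝ) : ℝ :=
  if x < h 1 then sInf ({t | x < h t} ∩ Ici 0) else 1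

section quantile

variable {h φ : ℝ → ℝ} {x : ℝ}

lemma le_quantile {s : ℝ} (hx : x < h 1) (hs : ∀ t, 0 ≤ t → x < h t → s ≤ t) :
    s ≤ quantile h x := by
  rw [quantile, if_pos hx]
  exact le_csInf ⟨1, hx, mem_Ici.2 zero_le_one⟩ fun t ht => hs t ht.2 ht.1

lemma quantile_le_one (x : ℝ) : quantile h x ≤ 1 := by
  unfold quantile
  split_ifs with hx
  · exact csInf_le ⟨0, fun _ ht => ht.2⟩ ⟨hx, mem_Ici.2 zero_le_one⟩
  · exact le_rfl

lemma quantile_mem_Icc (x : ℝ) : quantile h x ∈ Icc (0 : ℝ) 1 := by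
  refine ⟨?_, quantile_le_one x⟩
  by_cases hx : x < h 1
  · exact le_quantile hx fun _ ht _ => ht
  · rw [quantile, if_neg hx]
    exact zero_le_one

lemma quantile_le (hm : Monotone h) {t : ℝ} (hxt : x < h t) (ht : 0 ≤ t) : quantile h x ≤ t := by
  by_cases hx : x < h 1
  · rw [quantile, if_pos hx]
    exact csInf_le ⟨0, fun _ ht => ht.2⟩ ⟨hxt, ht⟩
  · exact (quantile_le_one x).trans <|
      le_of_not_gt fun ht1 => hx (hxt.trans_le (hm ht1.le))

lemma monotone_quantile (hm : Monotone h) : Monotone (quantile h) := by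
  intro x y hxy
  by_cases hy : y < h 1
  · exact le_quantile hy fun t ht hyt => quantile_le hm (hxy.trans_lt hyt) ht
  · rw [show quantile h y = 1 from if_neg hy]
    exact quantile_le_one x

lemma continuousWithinAt_quantile (hm : Monotone h) (hx : x < h 1) :
    ContinuousWithinAt (quantile h) (Ici x) x := by
  refine tendsto_order.2 ⟨fun a ha => ?_, fun b hb => ?_⟩
  · filter_upwards [self_mem_nhdsWithin] with y hy
    exact ha.trans_le (monotone_quantile hm hy)
  · rw [quantile, if_pos hx] at hb
    obtain ⟨t, ⟨hxt, ht⟩, htb⟩ := exists_lt_of_csInf_lt (s := {t | x < h t} ∩ Ici 0)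
      ⟨1, hx, mem_Ici.2 zero_le_one⟩ hb
    filter_upwards [Ico_mem_nhdsGE hxt] with y hy
    exact (quantile_le hm hy.2 ht).trans_lt htb

lemma quantile_mem_Icc_of_mem_Ioo (hm : Monotone h) {u v : ℝ} (hx : x ∈ Ioo (h u) (h v))
    (hv0 : 0 ≤ v) (hv1 : v ≤ 1) : quantile h x ∈ Icc u v :=
  ⟨le_quantile (hx.2.trans_le (hm hv1)) fun _ _ hxt =>
      le_of_not_gt fun htu => (hm htu.le).not_gt (hx.1.trans hxt),
    quantile_le hm hx.2 hv0⟩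

lemma intervalIntegrable_comp_quantile (hm : Monotone h) (hφ : Continuous φ)
    (a b : ℝ) : IntervalIntegrable (fun x => φ (quantile h x)) volume a b := by
  obtain ⟨C, hC⟩ := (isCompact_Icc (a := (0 : ℝ)) (b := 1)).exists_bound_of_continuousOn
    hφ.continuousOn
  rw [intervalIntegrable_iff]
  exact Integrable.mono' (integrableOn_const (C := C) measure_Ioc_lt_top.ne)
    (hφ.measurable.comp (monotone_quantile hm).measurable).aestronglyMeasurable
    (ae_of_all _ fun x => hC _ (quantile_mem_Icc x))

lemma abs_integral_comp_quantile_sub_le (hm : Monotone h) (h0 : ∀ t < 0, h t = 0)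
    (hφ : Continuous φ) {u v ξ ε : ℝ} (huv : u ≤ v) (hv1 : v ≤ 1)
    (hξ : ∀ s ∈ Icc u v, |φ s - φ ξ| ≤ ε) :
    |(∫ x in h u..h v, φ (quantile h x)) - φ ξ * (h v - h u)| ≤ ε * (h v - h u) := by
  rcases lt_or_ge v 0 with hv0 | hv0
  · simp [h0 v hv0, h0 u (huv.trans_lt hv0)]
  have hle : h u ≤ h v := hm huv
  have hbound : ∀ᵐ x, x ∈ uIoc (h u) (h v) → ‖φ (quantile h x) - φ ξ‖ ≤ ε := by
    -- at `x = h v` the quantile may already lie beyond `v`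
    filter_upwards [Measure.ae_ne volume (h v)] with x hxv hx
    rw [uIoc_of_le hle] at hx
    exact hξ _ (quantile_mem_Icc_of_mem_Ioo hm ⟨hx.1, hx.2.lt_of_ne hxv⟩ hv0 hv1)
  calc |(∫ x in h u..h v, φ (quantile h x)) - φ ξ * (h v - h u)|
      = ‖∫ x in h u..h v, (φ (quantile h x) - φ ξ)‖ := by
        rw [intervalIntegral.integral_sub (intervalIntegrable_comp_quantile hm hφ _ _)
          intervalIntegrable_const, intervalIntegral.integral_const, smul_eq_mul, mul_comm,
          Real.norm_eq_abs]
    _ ≤ ε * |h v - h u| := intervalIntegral.norm_integral_le_of_norm_le_const_ae hbound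
    _ = ε * (h v - h u) := by rw [abs_of_nonneg (sub_nonneg.2 hle)]

variable {u : ℕ → ℝ} {n : ℕ} {δ ε : ℝ}

lemma abs_integral_comp_quantile_sub_stieltjesSum_le (hm : Monotone h) (h0 : ∀ t < 0, h t = 0)
    (hφ : Continuous φ) (hφδ : ∀ s t, |s - t| ≤ δ → |φ s - φ t| ≤ ε)
    (hu : Monotone u) (hu0 : u 0 < 0) (hun : u n = 1) (hmesh : ∀ i, u (i + 1) - u i ≤ δ) :
    |(∫ x in 0..h 1, φ (quantile h x)) - stieltjesSum φ h u n| ≤ ε * h 1 := by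
  have hsplit : (∫ x in 0..h 1, φ (quantile h x)) =
      ∑ i ∈ Finset.range n, ∫ x in h (u i)..h (u (i + 1)), φ (quantile h x) := by
    rw [intervalIntegral.sum_integral_adjacent_intervals fun _ _ =>
      intervalIntegrable_comp_quantile hm hφ _ _, hun, h0 _ hu0]
  have htelescope : ε * h 1 = ∑ i ∈ Finset.range n, ε * (h (u (i + 1)) - h (u i)) := by
    rw [← Finset.mul_sum, Finset.sum_range_sub (fun i => h (u i)), hun, h0 _ hu0, sub_zero]
  rw [hsplit, stieltjesSum, ← Finset.sum_sub_distrib, htelescope]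
  refine (Finset.abs_sum_le_sum_abs _ _).trans (Finset.sum_le_sum fun i hi => ?_)
  refine abs_integral_comp_quantile_sub_le hm h0 hφ (hu i.le_succ)
    (hun ▸ hu (Finset.mem_range.1 hi)) fun s hs => hφδ _ _ ?_
  rw [abs_of_nonpos (by linarith [hs.2])]
  linarith [hs.1, hmesh i]

end quantile

section ContinuousMap

variable (𝕜 : Type*) {X E : Type*} [NormedField 𝕜] [TopologicalSpace X] [CompactSpace X]
  [NormedAddCommGroup E] [NormedSpace 𝕜 E]

lemma ContinuousMap.memℓp_infty (f : C(X, E)) : Memℓp (E := fun _ : X => E) f ∞ :=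
  _root_.memℓp_infty ⟨‖f‖, by rintro _ ⟨x, rfl⟩; exact f.norm_coe_le_norm x⟩

def ContinuousMap.toLpInfty : C(X, E) →ₗᵢ[𝕜] lp (fun _ : X => E) ∞ where
  toFun f := ⟨⇑f, f.memℓp_infty⟩
  map_add' _ _ := rfl
  map_smul' _ _ := rfl
  norm_map' f := by
    refine le_antisymm (lp.norm_le_of_forall_le (norm_nonneg f) f.norm_coe_le_norm)
      ((f.norm_le (norm_nonneg _)).2 fun x => ?_)
    exact lp.norm_apply_le_norm (E := fun _ : X => E) ENNReal.top_ne_zero ⟨⇑f, f.memℓp_infty⟩ x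

@[simp]
lemma ContinuousMap.coe_toLpInfty (f : C(X, E)) : ⇑(ContinuousMap.toLpInfty 𝕜 f) = f :=
  rfl

end ContinuousMap

lemma exists_extension_comp_linearIsometry {𝕜 E F : Type*} [RCLike 𝕜]
    [NormedAddCommGroup E] [NormedSpace 𝕜 E] [NormedAddCommGroup F] [NormedSpace 𝕜 F]
    (j : E →ₗᵢ[𝕜] F) (f : StrongDual 𝕜 E) : ∃ g : StrongDual 𝕜 F, ∀ x, g (j x) = f x := by
  let e := j.equivRange
  obtain ⟨g, hg, -⟩ := exists_extension_norm_eq _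
    (f.comp e.symm.toContinuousLinearEquiv.toContinuousLinearMap)
  exact ⟨g, fun x => by simpa [e] using hg (e x)⟩

section lp

variable {S : Set ℝ}

def indicatorIic (S : Set ℝ) (t : ℝ) : lp (fun _ : S => ℝ) ∞ :=
  ⟨fun s => if (s : ℝ) ≤ t then 1 else 0,
    memℓp_infty ⟨1, by rintro _ ⟨s, rfl⟩; dsimp only; split_ifs <;> simp⟩⟩

lemma coe_sum_smul_indicatorIic (c : ℕ → ℝ) (u : ℕ → ℝ) (n : ℕ) (s : S) :
    (∑ k ∈ Finset.range n, c k • (indicatorIic S (u (k + 1)) - indicatorIic S (u k)) :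
      lp (fun _ : S => ℝ) ∞) s =
    ∑ k ∈ Finset.range n,
      c k * ((if (s : ℝ) ≤ u (k + 1) then 1 else 0) - (if (s : ℝ) ≤ u k then 1 else 0)) := by
  rw [lp.coeFn_sum, Finset.sum_apply]
  rfl

lemma norm_sum_smul_indicatorIic_sub_le {u : ℕ → ℝ} (hu : Monotone u) {c : ℕ → ℝ}
    (hc : ∀ k, |c k| ≤ 1) (n : ℕ) :
    ‖∑ k ∈ Finset.range n, c k • (indicatorIic S (u (k + 1)) - indicatorIic S (u k))‖ ≤ 1 := by
  refine lp.norm_le_of_forall_le zero_le_one fun s => ?_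
  rw [coe_sum_smul_indicatorIic, Real.norm_eq_abs]
  have ha : Monotone fun k => if (s : ℝ) ≤ u k then (1 : ℝ) else 0 := fun i j hij => by
    by_cases hi : (s : ℝ) ≤ u i
    · simp [hi, hi.trans (hu hij)]
    · simp only [hi, if_false]; split_ifs <;> norm_num
  refine (abs_sum_mul_sub_le_of_monotone ha hc n).trans ?_
  split_ifs <;> norm_num

variable (G : StrongDual ℝ (lp (fun _ : S => ℝ) ∞))

def distribFun (t : ℝ) : ℝ := G (indicatorIic S t)

lemma map_sum_smul_indicatorIic_sub (c u : ℕ → ℝ) (n : ℕ) :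
    G (∑ k ∈ Finset.range n, c k • (indicatorIic S (u (k + 1)) - indicatorIic S (u k))) =
      ∑ k ∈ Finset.range n, c k * (distribFun G (u (k + 1)) - distribFun G (u k)) := by
  simp only [map_sum, map_smul, map_sub, smul_eq_mul, distribFun]

lemma eVariationOn_distribFun_le : eVariationOn (distribFun G) univ ≤ ENNReal.ofReal ‖G‖ := by
  refine iSup_le fun ⟨n, u, hu, _⟩ => ?_
  set Δ : ℕ → ℝ := fun k => distribFun G (u (k + 1)) - distribFun G (u k)
  have hsum : ∑ k ∈ Finset.range n, |Δ k| ≤ ‖G‖ :=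
    calc ∑ k ∈ Finset.range n, |Δ k|
        = G (∑ k ∈ Finset.range n, (SignType.sign (Δ k) : ℝ) •
            (indicatorIic S (u (k + 1)) - indicatorIic S (u k))) := by
          simp only [map_sum_smul_indicatorIic_sub, Δ, sign_mul_self]
      _ ≤ ‖G‖ * 1 := (le_abs_self _).trans <| (G.le_opNorm _).trans <|
          mul_le_mul_of_nonneg_left (norm_sum_smul_indicatorIic_sub_le hu
            (fun k => by rcases SignType.sign (Δ k) with _ | _ | _ <;> simp) n) (norm_nonneg G)
      _ = ‖G‖ := mul_one _
  calc ∑ k ∈ Finset.range n, edist (distribFun G (u (k + 1))) (distribFun G (u k))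
      = ENNReal.ofReal (∑ k ∈ Finset.range n, |Δ k|) := by
        rw [ENNReal.ofReal_sum_of_nonneg fun k _ => abs_nonneg _]
        simp only [edist_dist, Real.dist_eq, Δ]
    _ ≤ ENNReal.ofReal ‖G‖ := ENNReal.ofReal_le_ofReal hsum

lemma boundedVariationOn_distribFun : BoundedVariationOn (distribFun G) univ :=
  ne_top_of_le_ne_top ENNReal.ofReal_ne_top (eVariationOn_distribFun_le G)

lemma distribFun_eq_zero {t : ℝ} (ht : ∀ s ∈ S, t < s) : distribFun G t = 0 := by
  have : indicatorIic S t = 0 := lp.ext <| funext fun s => if_neg (ht s s.2).not_ge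
  rw [distribFun, this, map_zero]

lemma abs_sub_stieltjesSum_distribFun_le {g : lp (fun _ : S => ℝ) ∞} {φ : ℝ → ℝ}
    (hg : ∀ s : S, g s = φ s) {δ ε : ℝ} (hφδ : ∀ s t, |s - t| ≤ δ → |φ s - φ t| ≤ ε)
    {u : ℕ → ℝ} {n : ℕ} (hu : Monotone u) (hmesh : ∀ i, u (i + 1) - u i ≤ δ)
    (hS : ∀ s ∈ S, u 0 < s ∧ s ≤ u n) :
    |G g - stieltjesSum φ (distribFun G) u n| ≤ ‖G‖ * ε := by
  set w := g - ∑ k ∈ Finset.range n,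
    φ (u (k + 1)) • (indicatorIic S (u (k + 1)) - indicatorIic S (u k))
  have hGw : G w = G g - stieltjesSum φ (distribFun G) u n := by
    rw [map_sub, map_sum_smul_indicatorIic_sub, stieltjesSum]
  have hw : ‖w‖ ≤ ε := by
    have hδ : 0 ≤ δ := (sub_nonneg.2 (hu (Nat.zero_le 1))).trans (hmesh 0)
    refine lp.norm_le_of_forall_le ((abs_nonneg _).trans (hφδ 0 0 (by simpa using hδ)))
      fun s => ?_
    obtain ⟨i, -, hsi, his, hsum⟩ :=
      exists_sum_mul_indicator_steps_eq hu (fun k => φ (u (k + 1))) (hS s s.2).1 n (hS s s.2).2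
    rw [lp.coeFn_sub, Pi.sub_apply, coe_sum_smul_indicatorIic, hsum, hg, Real.norm_eq_abs]
    exact hφδ _ _ (by rw [abs_of_nonpos (by linarith)]; linarith [hmesh i])
  rw [← hGw]
  exact (G.le_opNorm w).trans (mul_le_mul_of_nonneg_left hw (norm_nonneg G))

end lp

end

/-- Riesz-type representation: every continuous linear functional `F` on `C([0,1], ℝ)`
(with the sup norm) is the difference of two Riemann integrals of reparametrizations:
there are compact intervals `[c₁,d₁]`, `[c₂,d₂]` and right-continuous non-decreasing
maps `g₁† : [c₁,d₁] → [0,1]`, `g₂† : [c₂,d₂] → [0,1]` with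
`F f = ∫_{c₁}^{d₁} f (g₁† x) dx − ∫_{c₂}^{d₂} f (g₂† x) dx` for all continuous `f`. -/
theorem stmt10 (F : C(Set.Icc (0:ℝ) 1, ℝ) →L[ℝ] ℝ) :
    ∃ (c₁ d₁ c₂ d₂ : ℝ) (g₁ g₂ : ℝ → ℝ),
      c₁ ≤ d₁ ∧ c₂ ≤ d₂ ∧
      MonotoneOn g₁ (Set.Icc c₁ d₁) ∧ MonotoneOn g₂ (Set.Icc c₂ d₂) ∧
      (∀ x ∈ Set.Ico c₁ d₁, ContinuousWithinAt g₁ (Set.Ici x) x) ∧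
      (∀ x ∈ Set.Ico c₂ d₂, ContinuousWithinAt g₂ (Set.Ici x) x) ∧
      (∀ x ∈ Set.Icc c₁ d₁, g₁ x ∈ Set.Icc (0:ℝ) 1) ∧
      (∀ x ∈ Set.Icc c₂ d₂, g₂ x ∈ Set.Icc (0:ℝ) 1) ∧
      ∀ f : C(Set.Icc (0:ℝ) 1, ℝ),
        F f = (∫ x in c₁..d₁, f (Set.projIcc 0 1 zero_le_one (g₁ x)))
            - (∫ x in c₂..d₂, f (Set.projIcc 0 1 zero_le_one (g₂ x))) := by
  obtain ⟨G, hG⟩ := exists_extension_comp_linearIsometry (ContinuousMap.toLpInfty ℝ) F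
  obtain ⟨P, N, hP, hN, hP0, hN0, hβ⟩ := exists_monotone_sub_of_locallyBoundedVariationOn
    (boundedVariationOn_distribFun G).locallyBoundedVariationOn
    fun t ht => distribFun_eq_zero G fun s hs => ht.trans_le hs.1
  refine ⟨0, P 1, 0, N 1, quantile P, quantile N, hP0 (-1) (by norm_num) ▸ hP (by norm_num),
    hN0 (-1) (by norm_num) ▸ hN (by norm_num), (monotone_quantile hP).monotoneOn _,
    (monotone_quantile hN).monotoneOn _, fun x hx => continuousWithinAt_quantile hP hx.2,
    fun x hx => continuousWithinAt_quantile hN hx.2, fun x _ => quantile_mem_Icc x,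
    fun x _ => quantile_mem_Icc x, fun f => ?_⟩
  set φ : ℝ → ℝ := fun r => f (projIcc 0 1 zero_le_one r)
  have hφ : UniformContinuous φ := (CompactSpace.uniformContinuous_of_continuous
    f.continuous).comp (LipschitzWith.projIcc zero_le_one).uniformContinuous
  refine eq_of_forall_abs_sub_le_mul (C := ‖G‖ + P 1 + N 1) fun ε hε => ?_
  obtain ⟨δ, hδ, hφδ⟩ := hφ.exists_forall_abs_sub_le hε
  obtain ⟨n, u, hu, hu0, hun, hmesh⟩ := exists_partition hδ
  have hF := abs_sub_stieltjesSum_distribFun_le G (g := ContinuousMap.toLpInfty ℝ f)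
    (fun s => by simp [φ]) hφδ hu hmesh fun s hs => ⟨hu0.trans_le hs.1, hun ▸ hs.2⟩
  rw [hG, hβ, stieltjesSum_sub] at hF
  have hIP := abs_integral_comp_quantile_sub_stieltjesSum_le hP hP0 hφ.continuous hφδ
    hu hu0 hun hmesh
  have hIN := abs_integral_comp_quantile_sub_stieltjesSum_le hN hN0 hφ.continuous hφδ
    hu hu0 hun hmesh
  rw [abs_le] at hF hIP hIN ⊢
  constructor <;> linarith [hF.1, hF.2, hIP.1, hIP.2, hIN.1, hIN.2]
end

section
/- If X is a normed vector space and f : X → ℝ is continuous such that there exist open sets O ∋ x and O' ∋ 0 and a compact interval C with all difference quotients (f(y+rz)−f(y))/r ∈ C for y ∈ O, z ∈ O', and small r > 0 (i.e., f is locally Lipschitzian at x), then f is locally Lipschitz at x: there exist a neighbourhood U of x and k ≥ 0 with |f(a) − f(b)| ≤ k·‖a − b‖ for all a, b ∈ U. -/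
/-!
For `p ≠ q` take the direction `z = (ε / 2) • (q - p) / ‖q - p‖`, which lies in the ball
`B(0, ε)` of admissible directions, and the step `r = 2 ‖q - p‖ / ε`, so that `p + r • z = q`.
An upper bound `c` on the difference quotients then gives `f q - f p ≤ c r = (2c / ε) ‖q - p‖`,
and since `p` and `q` range over the same neighbourhood, exchanging them bounds `|f q - f p|`.
-/

open Set Metric Topology

theorem sub_le_mul_norm_sub_of_div_le {X : Type*} [NormedAddCommGroup X] [NormedSpace ℝ X]
    {f : X → ℝ} {O : Set X} {ε δ c : ℝ} (hε : 0 < ε)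
    (hquot : ∀ y ∈ O, ∀ z ∈ ball (0 : X) ε, ∀ r : ℝ, 0 < r → r < δ →
      (f (y + r • z) - f y) / r ≤ c)
    {p q : X} (hp : p ∈ O) (hpq : ‖q - p‖ < δ * ε / 2) :
    f q - f p ≤ 2 * c / ε * ‖q - p‖ := by
  rcases eq_or_ne q p with rfl | hne
  · simp
  have hd : 0 < ‖q - p‖ := norm_pos_iff.2 (sub_ne_zero.2 hne)
  set r : ℝ := 2 * ‖q - p‖ / ε
  set z : X := (ε / 2 / ‖q - p‖) • (q - p)
  have hr : 0 < r := by positivity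
  have hz : z ∈ ball (0 : X) ε := by
    rw [mem_ball_zero_iff, norm_smul, Real.norm_of_nonneg (by positivity)]
    field_simp
    linarith
  have hrδ : r < δ := by
    rw [div_lt_iff₀ hε]
    linarith
  have hstep : p + r • z = q := by
    rw [smul_smul, show r * (ε / 2 / ‖q - p‖) = 1 by simp only [r]; field_simp, one_smul, add_sub_cancel]
  have := hquot p hp z hz r hr hrδ
  rw [hstep, div_le_iff₀ hr] at this
  calc f q - f p ≤ c * r := this
    _ = 2 * c / ε * ‖q - p‖ := by ring

theorem stmt11_general {X : Type*} [NormedAddCommGroup X] [NormedSpace ℝ X]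
    (f : X → ℝ) (x : X)
    (O O' : Set X) (hO : IsOpen O) (hxO : x ∈ O) (hO' : IsOpen O') (h0O' : (0 : X) ∈ O')
    (c₁ c₂ δ : ℝ) (hδ : 0 < δ)
    (hbd : ∀ y ∈ O, ∀ z ∈ O', ∀ r : ℝ, 0 < r → r < δ →
      (f (y + r • z) - f y) / r ∈ Set.Icc c₁ c₂) :
    ∃ U ∈ 𝓝 x, ∃ k : ℝ, 0 ≤ k ∧ ∀ a ∈ U, ∀ b ∈ U, |f a - f b| ≤ k * ‖a - b‖ := by
  obtain ⟨ε₁, hε₁, hball₁⟩ := isOpen_iff.1 hO x hxO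
  obtain ⟨ε₂, hε₂, hball₂⟩ := isOpen_iff.1 hO' 0 h0O'
  have hquot : ∀ y ∈ O, ∀ z ∈ ball (0 : X) ε₂, ∀ r : ℝ, 0 < r → r < δ →
      (f (y + r • z) - f y) / r ≤ max c₂ 0 := fun y hy z hz r hr hrδ =>
    (hbd y hy z (hball₂ hz) r hr hrδ).2.trans (le_max_left _ _)
  set ρ := min ε₁ (δ * ε₂ / 4)
  refine ⟨ball x ρ, ball_mem_nhds x (by positivity), 2 * max c₂ 0 / ε₂, by positivity, ?_⟩
  have hle : ∀ a ∈ ball x ρ, ∀ b ∈ ball x ρ, f a - f b ≤ 2 * max c₂ 0 / ε₂ * ‖a - b‖ := by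
    intro a ha b hb
    refine sub_le_mul_norm_sub_of_div_le hε₂ hquot
      (hball₁ (ball_subset_ball (min_le_left _ _) hb)) ?_
    calc ‖a - b‖ = dist a b := (dist_eq_norm a b).symm
      _ ≤ dist a x + dist b x := dist_triangle_right a b x
      _ < ρ + ρ := add_lt_add ha hb
      _ ≤ δ * ε₂ / 2 := by linarith [min_le_right ε₁ (δ * ε₂ / 4)]
  intro a ha b hb
  exact abs_sub_le_iff.2 ⟨hle a ha b hb, norm_sub_rev a b ▸ hle b hb a ha⟩

/-- On a normed space, a function that is locally Lipschitzian at `x` (all difference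
quotients `(f (y + r • z) − f y)/r` for `y` near `x`, `z` near `0` and small `r > 0`
lie in a fixed compact interval) is locally Lipschitz at `x`. -/
theorem stmt11 {X : Type*} [NormedAddCommGroup X] [NormedSpace ℝ X]
    (f : X → ℝ) (hf : Continuous f) (x : X)
    (O O' : Set X) (hO : IsOpen O) (hxO : x ∈ O) (hO' : IsOpen O') (h0O' : (0 : X) ∈ O')
    (c₁ c₂ δ : ℝ) (hδ : 0 < δ)
    (hbd : ∀ y ∈ O, ∀ z ∈ O', ∀ r : ℝ, 0 < r → r < δ →
      (f (y + r • z) - f y) / r ∈ Set.Icc c₁ c₂) :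
    ∃ U ∈ 𝓝 x, ∃ k : ℝ, 0 ≤ k ∧ ∀ a ∈ U, ∀ b ∈ U, |f a - f b| ≤ k * ‖a - b‖ :=
  stmt11_general f x O O' hO hxO hO' h0O' c₁ c₂ δ hδ hbd
end

section
/- For dual numbers over intervals: if I₁, I₂, I₃, I₁', I₂', I₃' are elements of the interval domain 𝕀ℝ and r > 0 is rational, define R^r(I₁+εI₁', I₂+εI₂', I₃+εI₃') to hold iff I₃ ⊑ I₁ ⊓ I₂ and r·I₃' is consistent with I₂ − I₁ (i.e., r·I₃' and I₂ − I₁ have a common upper bound, equivalently nonempty intersection as intervals). Then R^r is closed under the interval-dual-number addition operation: if R^r(x₁,x₂,x₃) and R^r(y₁,y₂,y₃) then R^r(x₁+y₁, x₂+y₂, x₃+y₃), where (I+εI') + (J+εJ') = (I+J) + ε(I'+J'). -/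
open Set Pointwise

/-- An element of the interval domain `𝕀ℝ`: either the bottom element `ℝ` or a nonempty
compact interval. -/
def IsIntvl (S : Set ℝ) : Prop := S = Set.univ ∨ ∃ a b : ℝ, a ≤ b ∧ S = Set.Icc a b

/-- A dual interval number `I + εI'` is an element of `𝕀ℝ × 𝕀ℝ`. -/
def IsDualIntvl (p : Set ℝ × Set ℝ) : Prop := IsIntvl p.1 ∧ IsIntvl p.2

/-- Addition of dual interval numbers: `(I + εI') + (J + εJ') = (I+J) + ε(I'+J')`,
with Minkowski sums on components. -/
def dadd (p q : Set ℝ × Set ℝ) : Set ℝ × Set ℝ :=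
  (Set.image2 (· + ·) p.1 q.1, Set.image2 (· + ·) p.2 q.2)

/-- The logical relation `R^r` on dual interval numbers: `R^r(I₁+εI₁', I₂+εI₂', I₃+εI₃')`
holds iff `I₃ ⊑ I₁ ⊓ I₂` (in the reverse inclusion order, i.e. the convex hull of
`I₁ ∪ I₂` is contained in `I₃`) and `r·I₃'` is consistent with `I₂ − I₁` (nonempty
intersection, where `I₂ − I₁` is the Minkowski difference). -/
def Rr (r : ℝ) (p q s : Set ℝ × Set ℝ) : Prop :=
  convexHull ℝ (p.1 ∪ q.1) ⊆ s.1 ∧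
    ((r • s.2) ∩ Set.image2 (fun a b => a - b) q.1 p.1).Nonempty

lemma image2_add_eq (s t : Set ℝ) : Set.image2 (· + ·) s t = s + t := rfl

/-- The relation `R^r` is closed under addition of dual interval numbers. -/
theorem stmt15 (r : ℚ) (hr : 0 < r) (x₁ x₂ x₃ y₁ y₂ y₃ : Set ℝ × Set ℝ)
    (hx₁ : IsDualIntvl x₁) (hx₂ : IsDualIntvl x₂) (hx₃ : IsDualIntvl x₃)
    (hy₁ : IsDualIntvl y₁) (hy₂ : IsDualIntvl y₂) (hy₃ : IsDualIntvl y₃)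
    (h1 : Rr (r : ℝ) x₁ x₂ x₃) (h2 : Rr (r : ℝ) y₁ y₂ y₃) :
    Rr (r : ℝ) (dadd x₁ y₁) (dadd x₂ y₂) (dadd x₃ y₃) := by
  obtain ⟨hc1, a, ⟨u, hu, rfl⟩, b, hb, c, hc, hbc⟩ := h1
  obtain ⟨hc2, a', ⟨u', hu', rfl⟩, b', hb', c', hc', hbc'⟩ := h2
  constructor
  · -- convex hull part
    show convexHull ℝ ((x₁.1 + y₁.1) ∪ (x₂.1 + y₂.1)) ⊆ x₃.1 + y₃.1
    have key : convexHull ℝ ((x₁.1 + y₁.1) ∪ (x₂.1 + y₂.1)) ⊆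
        convexHull ℝ (x₁.1 ∪ x₂.1) + convexHull ℝ (y₁.1 ∪ y₂.1) := by
      apply convexHull_min
      · apply Set.union_subset
        · exact Set.add_subset_add
            ((Set.subset_union_left).trans (subset_convexHull ℝ _))
            ((Set.subset_union_left).trans (subset_convexHull ℝ _))
        · exact Set.add_subset_add
            ((Set.subset_union_right).trans (subset_convexHull ℝ _))
            ((Set.subset_union_right).trans (subset_convexHull ℝ _))
      · exact (convex_convexHull ℝ _).add (convex_convexHull ℝ _)
    exact key.trans (Set.add_subset_add hc1 hc2)
  · -- consistency part
    refine ⟨(r : ℝ) • u + (r : ℝ) • u', ⟨u + u', ⟨u, hu, u', hu', rfl⟩, by simp [smul_eq_mul, mul_add]⟩, b + b', ⟨b, hb, b', hb', rfl⟩, c + c', ⟨c, hc, c', hc', rfl⟩, ?_⟩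
    simp only [smul_eq_mul] at hbc hbc' ⊢
    linarith
end

section
/- Let f : 𝕀ℝ×𝕀ℝ → 𝕀ℝ×𝕀ℝ (thought of as a function on dual interval numbers I + εI') be Scott continuous, standard-robust (its first output component depends only on the first input component) and standard maximal preserving (it maps inputs with singleton first component to outputs with singleton first component), and suppose that for all real x, x': In(f(x + εx')) ⊑ L⟨f⟩(x, x'), where ⟨f⟩(x) := St(f(x+ε0)) is the real function represented by f and L is the domain-theoretic directional derivative. Then f is locally consistent: for all rational intervals [a,b] (with a<b) and [c,d], In(f([a,b] + ε[c,d])) is consistent (has nonempty intersection) with the interval ((⟨f⟩(b) − ⟨f⟩(a))/(b−a))·[c,d]. -/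
/-
If the difference quotients of `φ` in direction `c` are bounded at every point of `[a, b]`,
then `φ` is continuous there, so `t ↦ φ t - m t` with `m = (φ b - φ a)/(b - a)` has an
interior local extremum `x` by Rolle's theorem; comparing quotients on both sides of `x` shows
that `m c` lies between the liminf and the limsup, i.e. `m c ∈ Lφ(x, c)`. If they are unbounded
at some `x`, then `Lφ(x, c) = ℝ`. Either way `In(f(x + εc))` contains `m c`, and monotonicity of
`f` transports this to `In(f([a,b] + ε[c,d]))`.
-/

open Filter Topology Classical

variable {X : Type*} [AddCommGroup X] [Module ℝ X] [TopologicalSpace X]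
  [IsTopologicalAddGroup X] [ContinuousSMul ℝ X] [T2Space X]

open Set

section DifferenceQuotients

variable {E : Type*} [AddCommGroup E] [Module ℝ E] [TopologicalSpace E] {φ : E → ℝ} {x c : E}

lemma tendsto_dqF_of_tendsto {y : ℝ → E} (hy : Tendsto y (𝓝[>] 0) (𝓝 x)) :
    Tendsto (fun r => (φ (y r + r • c) - φ (y r)) / r) (𝓝[>] 0) (dqF φ x c) :=
  tendsto_map.comp ((hy.prodMk tendsto_const_nhds).prodMk tendsto_id)

lemma frequently_dqF_of_isLocalMin [ContinuousAdd E] [ContinuousSMul ℝ E] (ℓ : E →ₗ[ℝ] ℝ)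
    (h : IsLocalMin (fun y => φ y - ℓ y) x) :
    (∃ᶠ v in dqF φ x c, ℓ c ≤ v) ∧ ∃ᶠ v in dqF φ x c, v ≤ ℓ c := by
  -- forward quotients based at `x`, and backward ones based at `x - r • c`
  have hline (s : ℝ) : Tendsto (fun r : ℝ => x + (s * r) • c) (𝓝[>] 0) (𝓝 x) := by
    have : Continuous fun r : ℝ => x + (s * r) • c := by fun_prop
    simpa using (this.tendsto 0).mono_left nhdsWithin_le_nhds
  constructor
  · refine (tendsto_dqF_of_tendsto tendsto_const_nhds).frequently (Eventually.frequently ?_)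
    filter_upwards [(hline 1).eventually h, self_mem_nhdsWithin] with r hr (hr0 : 0 < r)
    simp only [one_mul, map_add, map_smul, smul_eq_mul] at hr
    rw [le_div_iff₀ hr0]
    linarith
  · refine (tendsto_dqF_of_tendsto (by simpa using hline (-1))).frequently
      (Eventually.frequently ?_)
    filter_upwards [(hline (-1)).eventually h, self_mem_nhdsWithin] with r hr (hr0 : 0 < r)
    simp only [neg_one_mul, neg_smul, ← sub_eq_add_neg, map_sub, map_smul, smul_eq_mul] at hr
    rw [← sub_eq_add_neg, sub_add_cancel, div_le_iff₀ hr0]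
    linarith

lemma dqF_neg : dqF (fun y => -φ y) x c = map Neg.neg (dqF φ x c) := by
  rw [dqF, dqF, map_map]
  congr 1
  funext p
  simp only [Function.comp_apply]
  ring

lemma mem_LIntv_of_frequently {t : ℝ} (hge : ∃ᶠ v in dqF φ x c, t ≤ v)
    (hle : ∃ᶠ v in dqF φ x c, v ≤ t) : t ∈ LIntv φ x c := by
  unfold LIntv
  split_ifs with hbdd
  · exact ⟨liminf_le_of_frequently_le hle (by rw [IsBoundedUnder, map_id]; exact hbdd.2),
      le_limsup_of_frequently_le hge (by rw [IsBoundedUnder, map_id]; exact hbdd.1)⟩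
  · trivial

lemma mem_LIntv_of_isLocalExtr [ContinuousAdd E] [ContinuousSMul ℝ E] (ℓ : E →ₗ[ℝ] ℝ)
    (h : IsLocalExtr (fun y => φ y - ℓ y) x) :
    ℓ c ∈ LIntv φ x c := by
  rcases h with hmin | hmax
  · obtain ⟨hge, hle⟩ := frequently_dqF_of_isLocalMin (c := c) ℓ hmin
    exact mem_LIntv_of_frequently hge hle
  · have hmin : IsLocalMin (fun y => -φ y - (-ℓ) y) x := by
      filter_upwards [hmax] with y hy
      simp only [LinearMap.neg_apply]
      linarith
    obtain ⟨hge, hle⟩ := frequently_dqF_of_isLocalMin (c := c) (-ℓ) hmin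
    rw [dqF_neg, frequently_map] at hge hle
    exact mem_LIntv_of_frequently
      (hle.mono fun v hv => by simp only [LinearMap.neg_apply] at hv; linarith)
      (hge.mono fun v hv => by simp only [LinearMap.neg_apply] at hv; linarith)

end DifferenceQuotients

section Real

variable {φ : ℝ → ℝ} {x c : ℝ}

lemma exists_abs_sub_le_of_isBounded_dqF (hle : (dqF φ x c).IsBounded (· ≤ ·))
    (hge : (dqF φ x c).IsBounded (· ≥ ·)) :
    ∃ z ≠ 0, ∃ K ε : ℝ, 0 < ε ∧
      ∀ y r, |y - x| < ε → r ∈ Ioo 0 ε → |φ (y + r * z) - φ y| ≤ K * r := by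
  obtain ⟨U, hU⟩ := hle
  obtain ⟨L, hL⟩ := hge
  obtain ⟨⟨⟨ε₁, ε₂⟩, ε₃⟩, ⟨⟨hε₁, hε₂⟩, hε₃⟩, hbound⟩ :=
    ((Metric.nhds_basis_ball.prod Metric.nhds_basis_ball).prod (nhdsGT_basis 0)).eventually_iff.mp
      (hU.and hL)
  -- the bound holds for all directions near `c`, which may be `0`: pick a nonzero one
  obtain ⟨z, hzc, hz⟩ := (dense_compl_singleton (0 : ℝ)).inter_open_nonempty _
    Metric.isOpen_ball ⟨c, Metric.mem_ball_self hε₂⟩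
  refine ⟨z, hz, max |U| |L|, min ε₁ ε₃, lt_min hε₁ hε₃, fun y r hy hr => ?_⟩
  have hr0 : 0 < r := hr.1
  obtain ⟨hqU, hqL⟩ := hbound (show ((y, z), r) ∈ _ from
    ⟨⟨by simpa [Real.dist_eq] using hy.trans_le (min_le_left _ _), hzc⟩,
      hr.1, hr.2.trans_le (min_le_right _ _)⟩)
  have hq : |(φ (y + r * z) - φ y) / r| ≤ max |U| |L| := by
    simp only [smul_eq_mul] at hqU hqL
    exact abs_le.2 ⟨by linarith [neg_abs_le L, le_max_right |U| |L|],
      by linarith [le_abs_self U, le_max_left |U| |L|]⟩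
  rwa [abs_div, abs_of_pos hr0, div_le_iff₀ hr0] at hq

lemma continuousAt_of_isBounded_dqF (hle : (dqF φ x c).IsBounded (· ≤ ·))
    (hge : (dqF φ x c).IsBounded (· ≥ ·)) : ContinuousAt φ x := by
  obtain ⟨z, hz, K, ε, hε, hbound⟩ := exists_abs_sub_le_of_isBounded_dqF hle hge
  have hz' : 0 < |z| := abs_pos.2 hz
  refine continuousAt_of_locally_lipschitz (lt_min hε (mul_pos hε hz')) (K / |z|)
    fun y hy => ?_
  rw [Real.dist_eq, lt_min_iff] at hy
  rw [Real.dist_eq, Real.dist_eq]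
  obtain rfl | hyx := eq_or_ne y x
  · simp
  set t := (y - x) / z
  have ht : |t| ∈ Ioo 0 ε := ⟨abs_pos.2 (div_ne_zero (sub_ne_zero.2 hyx) hz),
    by rw [abs_div, div_lt_iff₀ hz']; exact hy.2⟩
  have hyt : x + t * z = y := by rw [div_mul_cancel₀ _ hz]; ring
  -- the quotient is based at `x` if `t > 0` and at `y` if `t < 0`
  have key : |φ y - φ x| ≤ K * |t| := by
    rcases lt_or_gt_of_ne (abs_pos.1 ht.1) with htneg | htpos
    · have := hbound y |t| hy.1 ht
      rw [abs_of_neg htneg, show y + -t * z = x by linarith, abs_sub_comm] at this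
      rwa [abs_of_neg htneg]
    · have := hbound x |t| (by simpa using hε) ht
      rw [abs_of_pos htpos, hyt] at this
      rwa [abs_of_pos htpos]
  calc |φ y - φ x| ≤ K * |t| := key
    _ = K / |z| * |y - x| := by rw [abs_div]; ring

theorem exists_slope_mul_mem_LIntv {a b : ℝ} (hab : a < b) (c : ℝ) :
    ∃ x ∈ Icc a b, (φ b - φ a) / (b - a) * c ∈ LIntv φ x c := by
  by_cases hbdd :
      ∀ x ∈ Icc a b, (dqF φ x c).IsBounded (· ≤ ·) ∧ (dqF φ x c).IsBounded (· ≥ ·)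
  · set m := (φ b - φ a) / (b - a)
    have hcont : ContinuousOn (fun t => φ t - m * t) (Icc a b) := fun t ht =>
      ((continuousAt_of_isBounded_dqF (hbdd t ht).1 (hbdd t ht).2).sub
        (continuousAt_const.mul continuousAt_id)).continuousWithinAt
    have hends : φ a - m * a = φ b - m * b := by
      have : m * (b - a) = φ b - φ a := div_mul_cancel₀ _ (sub_ne_zero.2 hab.ne')
      linarith
    obtain ⟨x, hx, hext⟩ := exists_isLocalExtr_Ioo hab hcont hends
    exact ⟨x, Ioo_subset_Icc_self hx, mem_LIntv_of_isLocalExtr (LinearMap.mulLeft ℝ m) hext⟩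
  · obtain ⟨x, hx, hunbdd⟩ := not_forall₂.mp hbdd
    exact ⟨x, hx, by rw [LIntv, if_neg hunbdd]; trivial⟩

end Real

open OrderDual in
theorem stmt19_general (f : (Set ℝ)ᵒᵈ × (Set ℝ)ᵒᵈ → (Set ℝ)ᵒᵈ × (Set ℝ)ᵒᵈ)
    (hscott : ScottContinuous f)
    (φ : ℝ → ℝ)
    (hder : ∀ x x' : ℝ,
      LIntv φ x x' ⊆ ofDual (f (toDual ({x} : Set ℝ), toDual ({x'} : Set ℝ))).2) :
    ∀ a b c d : ℚ, (a : ℝ) < b → (c : ℝ) ≤ d →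
      (ofDual (f (toDual (Set.Icc (a : ℝ) (b : ℝ)),
          toDual (Set.Icc (c : ℝ) (d : ℝ)))).2 ∩
        ((fun t => ((φ b - φ a) / ((b : ℝ) - a)) * t) '' Set.Icc (c : ℝ) (d : ℝ))).Nonempty := by
  intro a b c d hab hcd
  obtain ⟨x, hx, hmem⟩ := exists_slope_mul_mem_LIntv (φ := φ) hab c
  have hle : (toDual (Icc (a : ℝ) b), toDual (Icc (c : ℝ) d)) ≤
      (toDual ({x} : Set ℝ), toDual ({(c : ℝ)} : Set ℝ)) :=
    ⟨singleton_subset_iff.2 hx, singleton_subset_iff.2 ⟨le_rfl, hcd⟩⟩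
  exact ⟨_, (hscott.monotone hle).2 (hder x c hmem), c, ⟨le_rfl, hcd⟩, rfl⟩

open OrderDual in
/-- Let `f` be a Scott-continuous function on the domain of dual interval numbers
(`𝕀ℝ × 𝕀ℝ` ordered by reverse inclusion, modeled as `(Set ℝ)ᵒᵈ × (Set ℝ)ᵒᵈ`) that is
standard-robust, standard maximal preserving, and represents the real function `φ`
(`St (f (x + ε0)) = {φ x}`). If `In (f (x + εx')) ⊑ Lφ(x,x')` for all real `x, x'`
(i.e. `LIntv φ x x' ⊆ In (f (x + εx'))`), then `f` is locally consistent: for all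
rational intervals `[a,b]` (`a < b`) and `[c,d]`, `In (f ([a,b] + ε[c,d]))` has nonempty
intersection with `((φ b − φ a)/(b − a))·[c,d]`. -/
theorem stmt19 (f : (Set ℝ)ᵒᵈ × (Set ℝ)ᵒᵈ → (Set ℝ)ᵒᵈ × (Set ℝ)ᵒᵈ)
    (hscott : ScottContinuous f)
    (hrobust : ∀ p q : (Set ℝ)ᵒᵈ × (Set ℝ)ᵒᵈ, p.1 = q.1 → (f p).1 = (f q).1)
    (hmax : ∀ p : (Set ℝ)ᵒᵈ × (Set ℝ)ᵒᵈ, (∃ x : ℝ, ofDual p.1 = ({x} : Set ℝ)) →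
      ∃ y : ℝ, ofDual (f p).1 = ({y} : Set ℝ))
    (φ : ℝ → ℝ)
    (hφ : ∀ x : ℝ,
      ofDual (f (toDual ({x} : Set ℝ), toDual ({0} : Set ℝ))).1 = ({φ x} : Set ℝ))
    (hder : ∀ x x' : ℝ,
      LIntv φ x x' ⊆ ofDual (f (toDual ({x} : Set ℝ), toDual ({x'} : Set ℝ))).2) :
    ∀ a b c d : ℚ, (a : ℝ) < b → (c : ℝ) ≤ d →
      (ofDual (f (toDual (Set.Icc (a : ℝ) (b : ℝ)),
          toDual (Set.Icc (c : ℝ) (d : ℝ)))).2 ∩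
        ((fun t => ((φ b - φ a) / ((b : ℝ) - a)) * t) '' Set.Icc (c : ℝ) (d : ℝ))).Nonempty :=
  stmt19_general f hscott φ hder
end
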